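/- For vector fields $X,Y$ on $M$, the map $\alpha_{X,Y}(\varphi,\psi)=(\varphi,\imath_{Y-X}\varphi+\psi)$ is a chain map from the complex $(\widetilde{\Omega}^\bullet(M),\widetilde{d}_X)$ to $(\widetilde{\Omega}^\bullet(M),\widetilde{d}_Y)$, i.e. $\widetilde{d}_Y\circ\alpha_{X,Y}=\alpha_{X,Y}\circ\widetilde{d}_X$, and $\alpha_{Y,X}\circ\alpha_{X,Y}=\mathrm{id}$. -/
import Mathlib

/-- The 1-differentiable operator `d̃_X (φ, ψ) = (dφ, L_X φ - dψ)`. -/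
def dTilde {A : Type*} [AddCommGroup A] [Module ℝ A] (d L : A →ₗ[ℝ] A) (x : A × A) : A × A :=
  (d x.1, L x.1 - d x.2)

/-- The comparison map `α_{X,Y} (φ, ψ) = (φ, i_{Y-X} φ + ψ) = (φ, i_Y φ - i_X φ + ψ)`,
using linearity of the interior product in the vector field. -/
def alphaT {A : Type*} [AddCommGroup A] [Module ℝ A] (iX iY : A →ₗ[ℝ] A)
    (x : A × A) : A × A :=
  (x.1, iY x.1 - iX x.1 + x.2)

/-- `α_{X,Y}` is a chain map from `(Ω̃•, d̃_X)` to `(Ω̃•, d̃_Y)`, i.e.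
`d̃_Y ∘ α_{X,Y} = α_{X,Y} ∘ d̃_X`, and `α_{Y,X} ∘ α_{X,Y} = id`. Uses Cartan's
formula for `X` and `Y` (hence for `Z = Y - X`). -/
theorem stmt17 {A : Type*} [AddCommGroup A] [Module ℝ A] (d LX LY iX iY : A →ₗ[ℝ] A)
    (hCX : ∀ a : A, LX a = d (iX a) + iX (d a))
    (hCY : ∀ a : A, LY a = d (iY a) + iY (d a)) :
    (∀ x : A × A, dTilde d LY (alphaT iX iY x) = alphaT iX iY (dTilde d LX x)) ∧
      (∀ x : A × A, alphaT iY iX (alphaT iX iY x) = x) := by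
  constructor
  · intro x
    simp only [dTilde, alphaT, hCX, hCY, map_add, map_sub, Prod.mk.injEq]
    constructor
    · trivial
    · abel
  · intro x
    simp only [alphaT]
    ext <;> simp <;> abel
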